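/- arXiv:1011.5737 — 2 statements merged into one kernel-verified Lean document; each statement's English description precedes it below -/
import Mathlib

section
/- Let G be a graph and let H be obtained from G by substituting (nonempty) complete graphs for the vertices of G. Then there is a bijection between the minimal chordal completions of G and the minimal chordal completions of H. Concretely, if V(G) = {v_1,...,v_n} and V(H) is partitioned into cliques C_1 ∪ ... ∪ C_n with x ∈ C_i, y ∈ C_j (i ≠ j) adjacent in H iff v_i v_j ∈ E(G), then mapping a graph G' on V(G) to the graph H' on V(H) in which each C_i is a clique and x ∈ C_i, y ∈ C_j (i ≠ j) are adjacent iff v_i v_j ∈ E(G'), restricts to such a bijection. -/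
open SimpleGraph

/-- `f : ZMod n → V` traces an induced cycle of length `n` in `G`:
`f` is injective and adjacency holds exactly between consecutive vertices. -/
def IsInducedCycle {V : Type*} (G : SimpleGraph V) (n : ℕ) (f : ZMod n → V) : Prop :=
  Function.Injective f ∧ ∀ i j : ZMod n, G.Adj (f i) (f j) ↔ (j = i + 1 ∨ i = j + 1)

/-- A graph is chordal if it has no induced cycle of length at least 4. -/
def Chordal {V : Type*} (G : SimpleGraph V) : Prop :=
  ∀ n, 4 ≤ n → ∀ f : ZMod n → V, ¬ IsInducedCycle G n f

/-- `G'` is a chordal completion of `G`. -/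
def ChordalCompletion {V : Type*} (G G' : SimpleGraph V) : Prop :=
  Chordal G' ∧ G ≤ G'

/-- Minimal chordal completion: no proper spanning subgraph containing `G` is chordal. -/
def MinimalChordalCompletion {V : Type*} (G G' : SimpleGraph V) : Prop :=
  ChordalCompletion G G' ∧ ∀ H, ChordalCompletion G H → H ≤ G' → H = G'

/-- The graph obtained from `G` by substituting, for each vertex `i`,
the complete graph on `C i`. -/
def blowup {V : Type*} (G : SimpleGraph V) (C : V → Type*) :
    SimpleGraph (Σ i, C i) where
  Adj x y := G.Adj x.1 y.1 ∨ (x.1 = y.1 ∧ x ≠ y)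
  symm := by
    constructor
    rintro x y (h | ⟨h1, h2⟩)
    · exact Or.inl h.symm
    · exact Or.inr ⟨h1.symm, h2.symm⟩
  loopless := by
    constructor
    rintro x (h | ⟨_, h2⟩)
    · exact G.irrefl h
    · exact h2 rfl

/-! Blowing up preserves and reflects chordality: an induced cycle of length `≥ 4` meets each
block at most once, because two vertices of a block are adjacent true twins. Hence
`G' ↦ blowup G' C` is injective and sends minimal chordal completions of `G` to minimal ones of
`blowup G C`: a smaller completion restricts, along a transversal of the blocks, to a completion
of `G` below `G'`. For surjectivity, let `H` be a minimal chordal completion of `blowup G C` and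
`u, v` two vertices of one block. Deleting the edges from `v` to vertices outside `N[u]` keeps `H`
chordal, because in a chordal graph a vertex seeing both ends of an induced path sees all of it,
and still contains `blowup G C`; by minimality `N(v) ⊆ N[u]` in `H`. So `H` is the blowup of its
restriction to a transversal. -/

section Cycles

variable {V : Type*} {H : SimpleGraph V}

lemma ZMod.natCast_ne_zero_of_lt {n k : ℕ} (h0 : 0 < k) (hk : k < n) : (k : ZMod n) ≠ 0 :=
  fun h => absurd (Nat.le_of_dvd h0 ((ZMod.natCast_eq_zero_iff k n).1 h)) (by omega)

lemma ZMod.natCast_eq_natCast_add_one_iff {n s t : ℕ} (hn : 1 < n) (hs : s < n) (ht : t < n) :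
    (t : ZMod n) = s + 1 ↔ t = s + 1 ∨ (s = n - 1 ∧ t = 0) := by
  have : Fact (1 < n) := ⟨hn⟩
  rw [← (ZMod.val_injective n).eq_iff, ZMod.val_add, ZMod.val_cast_of_lt hs,
    ZMod.val_cast_of_lt ht, ZMod.val_one]
  rcases Nat.lt_or_ge (s + 1) n with h | h
  · rw [Nat.mod_eq_of_lt h]; omega
  · rw [show s + 1 = n by omega, Nat.mod_self]; omega

lemma isInducedCycle_iff_nat {n : ℕ} (hn : 2 ≤ n) (f : ZMod n → V) :
    IsInducedCycle H n f ↔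
      (∀ s < n, ∀ t < n, f s = f t → s = t) ∧
      ∀ s < n, ∀ t < n, (H.Adj (f s) (f t) ↔
        t = s + 1 ∨ s = t + 1 ∨ (s = 0 ∧ t = n - 1) ∨ (t = 0 ∧ s = n - 1)) := by
  have : NeZero n := ⟨by omega⟩
  have hcast : ∀ a : ZMod n, ∃ s < n, (s : ZMod n) = a :=
    fun a => ⟨a.val, a.val_lt, ZMod.natCast_zmod_val a⟩
  constructor
  · rintro ⟨hinj, hadj⟩
    refine ⟨fun s hs t ht h => ?_, fun s hs t ht => ?_⟩
    · simpa only [ZMod.val_cast_of_lt hs, ZMod.val_cast_of_lt ht] using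
        congrArg ZMod.val (hinj h)
    · rw [hadj, ZMod.natCast_eq_natCast_add_one_iff hn hs ht,
        ZMod.natCast_eq_natCast_add_one_iff hn ht hs]
      omega
  · rintro ⟨hinj, hadj⟩
    refine ⟨fun a b h => ?_, fun i j => ?_⟩
    · obtain ⟨s, hs, rfl⟩ := hcast a
      obtain ⟨t, ht, rfl⟩ := hcast b
      rw [hinj s hs t ht h]
    · obtain ⟨s, hs, rfl⟩ := hcast i
      obtain ⟨t, ht, rfl⟩ := hcast j
      rw [hadj s hs t ht, ZMod.natCast_eq_natCast_add_one_iff hn hs ht,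
        ZMod.natCast_eq_natCast_add_one_iff hn ht hs]
      omega

lemma isInducedCycle_of_nat {n : ℕ} (hn : 2 ≤ n) (g : ℕ → V)
    (hinj : ∀ s < n, ∀ t < n, g s = g t → s = t)
    (hadj : ∀ s < n, ∀ t < n, (H.Adj (g s) (g t) ↔
      t = s + 1 ∨ s = t + 1 ∨ (s = 0 ∧ t = n - 1) ∨ (t = 0 ∧ s = n - 1))) :
    IsInducedCycle H n (fun i => g i.val) := by
  have : NeZero n := ⟨by omega⟩
  refine (isInducedCycle_iff_nat hn _).2 ⟨fun s hs t ht h => ?_, fun s hs t ht => ?_⟩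
  · simp only [ZMod.val_cast_of_lt hs, ZMod.val_cast_of_lt ht] at h
    exact hinj s hs t ht h
  · simp only [ZMod.val_cast_of_lt hs, ZMod.val_cast_of_lt ht]
    exact hadj s hs t ht

lemma IsInducedCycle.rotate {n : ℕ} {f : ZMod n → V} (hf : IsInducedCycle H n f)
    (i₀ : ZMod n) :
    IsInducedCycle H n (fun t => f (i₀ + t)) := by
  refine ⟨fun a b hab => add_left_cancel (hf.1 hab), fun i j => ?_⟩
  rw [hf.2, add_assoc, add_assoc, add_right_inj, add_right_inj]

lemma IsInducedCycle.exists_adj_not_adj {n : ℕ} {f : ZMod n → V} (hf : IsInducedCycle H n f)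
    (hn : 4 ≤ n) {i j : ZMod n} (hij : H.Adj (f i) (f j)) :
    ∃ k, H.Adj (f k) (f i) ∧ ¬ H.Adj (f k) (f j) ∧ f k ≠ f j := by
  have h1 : (1 : ZMod n) ≠ 0 := by
    exact_mod_cast ZMod.natCast_ne_zero_of_lt (k := 1) one_pos (by omega)
  have h2 : (2 : ZMod n) ≠ 0 := by
    exact_mod_cast ZMod.natCast_ne_zero_of_lt (k := 2) two_pos (by omega)
  have h3 : (3 : ZMod n) ≠ 0 := by
    exact_mod_cast ZMod.natCast_ne_zero_of_lt (k := 3) three_pos (by omega)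
  rcases (hf.2 i j).1 hij with rfl | rfl
  · refine ⟨i - 1, (hf.2 _ _).2 (Or.inl (by ring)), ?_, hf.1.ne fun h => h2 ?_⟩
    · rw [hf.2]
      rintro (h | h)
      · exact h1 (by linear_combination h)
      · exact h3 (by linear_combination -h)
    · linear_combination -h
  · refine ⟨j + 1 + 1, (hf.2 _ _).2 (Or.inr rfl), ?_, hf.1.ne fun h => h2 ?_⟩
    · rw [hf.2]
      rintro (h | h)
      · exact h3 (by linear_combination -h)
      · exact h1 (by linear_combination h)
    · linear_combination h

end Cycles

section Chordal

variable {V W : Type*} {H : SimpleGraph V}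

lemma Chordal.comap (f : W ↪ V) (hH : Chordal H) : Chordal (H.comap f) :=
  fun n hn g hg => hH n hn (f ∘ g) ⟨f.injective.comp hg.1, hg.2⟩

def IsInducedPath (H : SimpleGraph V) (m : ℕ) (P : ℕ → V) : Prop :=
  (∀ s ≤ m, ∀ t ≤ m, P s = P t → s = t) ∧
    ∀ s ≤ m, ∀ t ≤ m, (H.Adj (P s) (P t) ↔ t = s + 1 ∨ s = t + 1)

lemma IsInducedPath.mono {m k : ℕ} {P : ℕ → V} (hP : IsInducedPath H m P) (hk : k ≤ m) :
    IsInducedPath H k P :=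
  ⟨fun s hs t ht => hP.1 s (by omega) t (by omega),
    fun s hs t ht => hP.2 s (by omega) t (by omega)⟩

lemma IsInducedPath.shift {m k : ℕ} {P : ℕ → V} (hP : IsInducedPath H m P) (hk : k ≤ m) :
    IsInducedPath H (m - k) (fun t => P (k + t)) := by
  refine ⟨fun s hs t ht h => ?_, fun s hs t ht => ?_⟩
  · have := hP.1 (k + s) (by omega) (k + t) (by omega) h
    omega
  · rw [hP.2 (k + s) (by omega) (k + t) (by omega)]
    omega

/-- Split the path at an interior vertex seen by `u`; if there is none, `u` closes an induced
cycle of length `m + 2`. -/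
theorem Chordal.adj_of_isInducedPath (hH : Chordal H) {m : ℕ} {P : ℕ → V}
    (hP : IsInducedPath H m P) {u : V} (hu : ∀ s ≤ m, P s ≠ u)
    (h0 : H.Adj u (P 0)) (hm : H.Adj u (P m)) : ∀ s ≤ m, H.Adj u (P s) := by
  induction m using Nat.strong_induction_on generalizing P with
  | _ m ih =>
  intro s hs
  by_cases hk : ∃ k, 0 < k ∧ k < m ∧ H.Adj u (P k)
  · obtain ⟨k, hk0, hkm, hk⟩ := hk
    rcases le_total s k with hsk | hks
    · exact ih k hkm (hP.mono hkm.le) (fun t ht => hu t (by omega)) h0 hk s hsk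
    · have := ih (m - k) (by omega) (hP.shift hkm.le) (fun t ht => hu (k + t) (by omega))
        (by simpa using hk) (by rwa [Nat.add_sub_cancel' hkm.le]) (s - k) (by omega)
      rwa [Nat.add_sub_cancel' hks] at this
  push Not at hk
  rcases Nat.eq_zero_or_pos s with rfl | hs0
  · exact h0
  rcases hs.lt_or_eq with hsm | rfl
  swap
  · exact hm
  exfalso
  refine hH (m + 2) (by omega) _
    (isInducedCycle_of_nat (g := fun t => if t = m + 1 then u else P t) (by omega) ?_ ?_)
  · intro a ha b hb hab
    by_cases hau : a = m + 1 <;> by_cases hbu : b = m + 1 <;>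
      simp only [hau, hbu, if_true, if_false] at hab
    · omega
    · exact absurd hab.symm (hu b (by omega))
    · exact absurd hab (hu a (by omega))
    · exact hP.1 a (by omega) b (by omega) hab
  · have hu_adj : ∀ t ≤ m, (H.Adj u (P t) ↔ t = 0 ∨ t = m) := fun t ht =>
      ⟨fun h => by by_contra! h'; exact hk t (by omega) (by omega) h,
        by rintro (rfl | rfl) <;> assumption⟩
    intro a ha b hb
    by_cases hau : a = m + 1 <;> by_cases hbu : b = m + 1 <;>
      simp only [hau, hbu, if_true, if_false]
    · simp only [H.irrefl, false_iff]; omega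
    · rw [hu_adj b (by omega)]; omega
    · rw [H.adj_comm, hu_adj a (by omega)]; omega
    · rw [hP.2 a (by omega) b (by omega)]; omega

end Chordal

section TwinReduce

variable {V : Type*} {H K : SimpleGraph V} {u v : V}

/-- Cuts the neighbourhood of `v` down to the closed neighbourhood of `u`. -/
def twinReduce (H : SimpleGraph V) (u v : V) : SimpleGraph V where
  Adj a b := H.Adj a b ∧ (a = v → (H.Adj u b ∨ u = b)) ∧ (b = v → (H.Adj u a ∨ u = a))
  symm := ⟨fun _ _ h => ⟨h.1.symm, h.2.2, h.2.1⟩⟩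
  loopless := ⟨fun _ h => H.irrefl h.1⟩

lemma twinReduce_le (H : SimpleGraph V) (u v : V) : twinReduce H u v ≤ H :=
  fun _ _ h => h.1

lemma twinReduce_adj_iff {a b : V} (ha : a = v → H.Adj u b ∨ u = b)
    (hb : b = v → H.Adj u a ∨ u = a) : (twinReduce H u v).Adj a b ↔ H.Adj a b :=
  ⟨fun h => h.1, fun h => ⟨h, ha, hb⟩⟩

lemma le_twinReduce (hKH : K ≤ H) (hdom : ∀ w, K.Adj v w → w ≠ u → K.Adj u w) :
    K ≤ twinReduce H u v := by
  intro a b hab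
  refine ⟨hKH hab, ?_, ?_⟩
  · rintro rfl
    by_cases hb : b = u
    · exact Or.inr hb.symm
    · exact Or.inl (hKH (hdom b hab hb))
  · rintro rfl
    by_cases ha : a = u
    · exact Or.inr ha.symm
    · exact Or.inl (hKH (hdom a hab.symm ha))

lemma Chordal.false_of_twinReduce_cycle (hH : Chordal H) (huv : H.Adj u v) {n : ℕ}
    (hn : 4 ≤ n) {g : ℕ → V} (hg0 : g 0 = v)
    (hinj : ∀ s < n, ∀ t < n, g s = g t → s = t)
    (hadj : ∀ s < n, ∀ t < n, ((twinReduce H u v).Adj (g s) (g t) ↔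
      t = s + 1 ∨ s = t + 1 ∨ (s = 0 ∧ t = n - 1) ∨ (t = 0 ∧ s = n - 1))) : False := by
  have hv : ∀ s < n, g s = v → s = 0 := fun s hs h => hinj s hs 0 (by omega) (h.trans hg0.symm)
  have hoff : ∀ s < n, ∀ t < n, 0 < s → 0 < t → (H.Adj (g s) (g t) ↔
      t = s + 1 ∨ s = t + 1 ∨ (s = 0 ∧ t = n - 1) ∨ (t = 0 ∧ s = n - 1)) :=
    fun s hs t ht hs0 ht0 => by
      rw [← hadj s hs t ht, twinReduce_adj_iff (fun h => absurd (hv s hs h) (by omega))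
        (fun h => absurd (hv t ht h) (by omega))]
  have hnbr : ∀ t, (t = 1 ∨ t = n - 1) → H.Adj u (g t) ∨ u = g t := fun t ht =>
    ((hadj 0 (by omega) t (by omega)).2 (by omega)).2.1 hg0
  by_cases hu : ∃ s < n, g s = u
  · obtain ⟨s, hs, rfl⟩ := hu
    have hs1 : s = 1 ∨ s = n - 1 := by
      have := (hadj s hs 0 (by omega)).1 (by
        rw [hg0, twinReduce_adj_iff (fun _ => Or.inl huv) (fun _ => Or.inr rfl)]
        exact huv)
      omega
    rcases hnbr (n - s) (by omega) with h | h
    · have := (hoff s hs (n - s) (by omega) (by omega) (by omega)).1 h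
      omega
    · have := hinj s hs (n - s) (by omega) h
      omega
  push Not at hu
  have hpath : IsInducedPath H (n - 2) (fun t => g (t + 1)) :=
    ⟨fun s hs t ht h => by have := hinj (s + 1) (by omega) (t + 1) (by omega) h; omega,
      fun s hs t ht => by
        rw [hoff (s + 1) (by omega) (t + 1) (by omega) (by omega) (by omega)]
        omega⟩
  have hend : ∀ t, (t = 1 ∨ t = n - 1) → H.Adj u (g t) := fun t ht =>
    (hnbr t ht).resolve_right fun h => hu t (by omega) h.symm
  have hall : ∀ t < n, H.Adj u (g t) := by
    intro t ht
    rcases Nat.eq_zero_or_pos t with rfl | ht0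
    · exact hg0 ▸ huv
    · have := hH.adj_of_isInducedPath hpath (fun s hs => hu (s + 1) (by omega))
        (hend 1 (by omega)) (by rw [show n - 2 + 1 = n - 1 by omega]; exact hend _ (by omega))
        (t - 1) (by omega)
      rwa [Nat.sub_add_cancel ht0] at this
  refine hH n hn _ (isInducedCycle_of_nat (by omega) g hinj fun s hs t ht => ?_)
  rw [← hadj s hs t ht, twinReduce_adj_iff (fun _ => Or.inl (hall t ht))
    (fun _ => Or.inl (hall s hs))]

theorem Chordal.twinReduce (hH : Chordal H) (huv : H.Adj u v) : Chordal (twinReduce H u v) := by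
  intro n hn f hf
  by_cases hv : ∃ i, f i = v
  · obtain ⟨i₀, hi₀⟩ := hv
    obtain ⟨hinj, hadj⟩ := (isInducedCycle_iff_nat (by omega) _).1 (hf.rotate i₀)
    exact hH.false_of_twinReduce_cycle huv hn (g := fun s => f (i₀ + s)) (by simpa using hi₀)
      hinj hadj
  · push Not at hv
    refine hH n hn f ⟨hf.1, fun i j => ?_⟩
    rw [← hf.2, twinReduce_adj_iff (fun h => absurd h (hv i)) (fun h => absurd h (hv j))]

/-- Otherwise `twinReduce H u v` would be a smaller chordal completion of `K`. -/
theorem MinimalChordalCompletion.adj_of_dominated {w : V} (hH : MinimalChordalCompletion K H)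
    (huv : K.Adj u v) (hdom : ∀ w, K.Adj v w → w ≠ u → K.Adj u w) (hvw : H.Adj v w)
    (hwu : w ≠ u) : H.Adj u w := by
  have hred : twinReduce H u v = H := hH.2 _
    ⟨hH.1.1.twinReduce (hH.1.2 huv), le_twinReduce hH.1.2 hdom⟩ (twinReduce_le H u v)
  rw [← hred] at hvw
  exact (hvw.2.1 rfl).resolve_right hwu.symm

end TwinReduce

section Blowup

variable {V : Type*} {G G' : SimpleGraph V} {C : V → Type*}

lemma blowup_adj_iff_of_fst_eq {x y : Σ i, C i} (h : x.1 = y.1) :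
    (blowup G C).Adj x y ↔ x ≠ y :=
  ⟨fun hxy => hxy.ne, fun hne => Or.inr ⟨h, hne⟩⟩

lemma blowup_adj_iff_of_fst_ne {x y : Σ i, C i} (h : x.1 ≠ y.1) :
    (blowup G C).Adj x y ↔ G.Adj x.1 y.1 :=
  ⟨fun hxy => hxy.resolve_right fun h' => h h'.1, Or.inl⟩

lemma blowup_adj_of_adj_of_fst_eq {x x' w : Σ i, C i} (hx : x.1 = x'.1)
    (h : (blowup G C).Adj x w) (hw : w ≠ x') : (blowup G C).Adj x' w := by
  rcases h with h | ⟨h, -⟩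
  · exact Or.inl (hx ▸ h)
  · exact Or.inr ⟨hx.symm.trans h, hw.symm⟩

lemma blowup_mono (C : V → Type*) (h : G ≤ G') : blowup G C ≤ blowup G' C := by
  rintro x y (hxy | hxy)
  · exact Or.inl (h hxy)
  · exact Or.inr hxy

theorem chordal_blowup (hG : Chordal G) (C : V → Type*) : Chordal (blowup G C) := by
  intro n hn f hf
  have hfst : Function.Injective fun i => (f i).1 := by
    intro i j hij
    by_contra hne
    obtain ⟨k, hki, hkj, hkne⟩ :=
      hf.exists_adj_not_adj hn ((blowup_adj_iff_of_fst_eq hij).2 (hf.1.ne hne))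
    exact hkj (blowup_adj_of_adj_of_fst_eq hij hki.symm hkne).symm
  refine hG n hn _ ⟨hfst, fun i j => ?_⟩
  rw [← hf.2 i j]
  by_cases hij : i = j
  · subst hij
    exact iff_of_false (G.irrefl) ((blowup G C).irrefl)
  · exact (blowup_adj_iff_of_fst_ne (hfst.ne hij)).symm

def sigmaSection (c : ∀ i, C i) : V ↪ Σ i, C i :=
  ⟨fun i => ⟨i, c i⟩, fun _ _ h => congrArg Sigma.fst h⟩

@[simp]
lemma sigmaSection_apply (c : ∀ i, C i) (i : V) : sigmaSection c i = ⟨i, c i⟩ := rfl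

lemma exists_sigmaSection_eq [∀ i, Nonempty (C i)] {x y : Σ i, C i} (h : x.1 ≠ y.1) :
    ∃ c : ∀ i, C i, sigmaSection c x.1 = x ∧ sigmaSection c y.1 = y := by
  classical
  obtain ⟨i, a⟩ := x
  obtain ⟨j, b⟩ := y
  refine ⟨Function.update (Function.update (fun _ => Classical.arbitrary _) j b) i a, ?_, ?_⟩
  · simp
  · simp [Function.update_of_ne (Ne.symm h)]

lemma comap_blowup (G : SimpleGraph V) (c : ∀ i, C i) :
    (blowup G C).comap (sigmaSection c) = G := by
  ext a b
  exact ⟨fun h => h.resolve_right fun h' => h'.2 (by rw [show a = b from h'.1]), Or.inl⟩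

lemma blowup_injective (C : V → Type*) [∀ i, Nonempty (C i)] :
    Function.Injective fun G : SimpleGraph V => blowup G C :=
  Function.LeftInverse.injective
    (g := fun H => H.comap (sigmaSection fun _ => Classical.arbitrary _)) fun G => comap_blowup G _

lemma le_comap_of_blowup_le {H : SimpleGraph (Σ i, C i)} (c : ∀ i, C i) (h : blowup G C ≤ H) :
    G ≤ H.comap (sigmaSection c) :=
  comap_blowup G c ▸ SimpleGraph.comap_monotone _ h

lemma comap_le_of_le_blowup {H : SimpleGraph (Σ i, C i)} (c : ∀ i, C i) (h : H ≤ blowup G C) :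
    H.comap (sigmaSection c) ≤ G :=
  comap_blowup G c ▸ SimpleGraph.comap_monotone _ h

theorem minimalChordalCompletion_blowup [∀ i, Nonempty (C i)]
    (h : MinimalChordalCompletion G G') :
    MinimalChordalCompletion (blowup G C) (blowup G' C) := by
  refine ⟨⟨chordal_blowup h.1.1 C, blowup_mono C h.1.2⟩,
    fun H ⟨hHch, hHle⟩ hHle' => le_antisymm hHle' ?_⟩
  intro x y hxy
  by_cases hfst : x.1 = y.1
  · exact hHle ((blowup_adj_iff_of_fst_eq hfst).2 hxy.ne)
  obtain ⟨c, hx, hy⟩ := exists_sigmaSection_eq hfst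
  have hcomap : H.comap (sigmaSection c) = G' :=
    h.2 _ ⟨hHch.comap _, le_comap_of_blowup_le c hHle⟩ (comap_le_of_le_blowup c hHle')
  have := hcomap ▸ (blowup_adj_iff_of_fst_ne hfst).1 hxy
  rwa [SimpleGraph.comap_adj, hx, hy] at this

/-- Two vertices of a block are true twins of `blowup G C`, so `adj_of_dominated` applies. -/
lemma MinimalChordalCompletion.adj_of_adj_of_fst_eq {H : SimpleGraph (Σ i, C i)}
    (hH : MinimalChordalCompletion (blowup G C) H) {x x' y y' : Σ i, C i} (hx : x.1 = x'.1)
    (hy : y.1 = y'.1) (hxy : x.1 ≠ y.1) (h : H.Adj x y) : H.Adj x' y' := by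
  have move :
      ∀ {x x' y : Σ i, C i}, x.1 = x'.1 → x.1 ≠ y.1 → H.Adj x y → H.Adj x' y := by
    intro x x' y hx hxy h
    by_cases hxx : x = x'
    · exact hxx ▸ h
    refine hH.adj_of_dominated ((blowup_adj_iff_of_fst_eq hx.symm).2 (Ne.symm hxx))
      (fun w hw hwx => blowup_adj_of_adj_of_fst_eq hx hw hwx) h ?_
    rintro rfl
    exact hxy hx
  exact (move hy (fun e => hxy (hx.trans e.symm)) (move hx hxy h).symm).symm

lemma MinimalChordalCompletion.eq_blowup_comap {H : SimpleGraph (Σ i, C i)}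
    (hH : MinimalChordalCompletion (blowup G C) H) (c : ∀ i, C i) :
    H = blowup (H.comap (sigmaSection c)) C := by
  ext x y
  by_cases hfst : x.1 = y.1
  · rw [blowup_adj_iff_of_fst_eq hfst]
    exact ⟨fun h => h.ne, fun hne => hH.1.2 ((blowup_adj_iff_of_fst_eq hfst).2 hne)⟩
  · rw [blowup_adj_iff_of_fst_ne hfst, SimpleGraph.comap_adj]
    exact ⟨hH.adj_of_adj_of_fst_eq rfl rfl hfst, hH.adj_of_adj_of_fst_eq rfl rfl hfst⟩

theorem MinimalChordalCompletion.of_blowup [∀ i, Nonempty (C i)] {H : SimpleGraph (Σ i, C i)}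
    (hH : MinimalChordalCompletion (blowup G C) H) (c : ∀ i, C i) :
    MinimalChordalCompletion G (H.comap (sigmaSection c)) := by
  have hH_eq := hH.eq_blowup_comap c
  refine ⟨⟨hH.1.1.comap _, le_comap_of_blowup_le c hH.1.2⟩,
    fun L ⟨hLch, hGL⟩ hLle => ?_⟩
  apply blowup_injective C
  exact (hH.2 _ ⟨chordal_blowup hLch C, blowup_mono C hGL⟩
    (hH_eq ▸ blowup_mono C hLle)).trans hH_eq

end Blowup

theorem stmt_9_general {V : Type*} (G : SimpleGraph V)
    (C : V → Type*) [∀ i, Nonempty (C i)] :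
    Set.BijOn (fun G' : SimpleGraph V => blowup G' C)
      {G' | MinimalChordalCompletion G G'}
      {H' | MinimalChordalCompletion (blowup G C) H'} := by
  let c : ∀ i, C i := fun _ => Classical.arbitrary _
  exact ⟨fun G' hG' => minimalChordalCompletion_blowup hG', (blowup_injective C).injOn,
    fun H hH => ⟨H.comap (sigmaSection c), hH.of_blowup c, (hH.eq_blowup_comap c).symm⟩⟩

theorem stmt_9 {V : Type*} [Fintype V] (G : SimpleGraph V)
    (C : V → Type*) [∀ i, Nonempty (C i)] [∀ i, Fintype (C i)] :
    Set.BijOn (fun G' : SimpleGraph V => blowup G' C)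
      {G' | MinimalChordalCompletion G G'}
      {H' | MinimalChordalCompletion (blowup G C) H'} :=
  stmt_9_general G C
end

section
/- Let G be a graph and G' a chordal completion of G that is not minimal. Then there exists an edge e ∈ E(G') \ E(G) such that G' − e is still chordal. -/
open SimpleGraph

/-!
If `H ≤ G'` are chordal and `H ≠ G'`, some edge `uv` of `G'` missing from `H` can be added to
`H` keeping it chordal: take one whose ends have the most common `H`-neighbours. An induced cycle
of `H ⊔ uv` must use `uv`, so it is an induced `H`-path `p 0 = v, …, p k = u` with `k ≥ 3`; in the
chordal graph `G'` this path closes into a cycle, which has a chord `p a p (a + 2)`. In a chordal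
graph a vertex adjacent to both ends of an induced path is adjacent to all of it, so `p a` and
`p (a + 2)` share every common neighbour of `u` and `v`, and also `p (a + 1)`: a contradiction.
Adding edges this way leads from a chordal completion `H < G'` up to `G'` through chordal graphs,
the last of which is `G'` minus an edge not in `H`, hence not in `G`.
-/

section

variable {V : Type*}

theorem ZMod.natCast_eq_natCast_add_one_iff_s18 {n a b : ℕ} (ha : a < n) (hb : b < n) :
    (b : ZMod n) = a + 1 ↔ b = a + 1 ∨ a + 1 = n ∧ b = 0 := by
  rw [← Nat.cast_succ, ZMod.natCast_eq_natCast_iff', Nat.mod_eq_of_lt hb]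
  rcases (Nat.succ_le_of_lt ha).lt_or_eq with h | h
  · rw [Nat.mod_eq_of_lt h]; omega
  · rw [h, Nat.mod_self]; omega

theorem ZMod.eq_add_one_iff_val {n : ℕ} [NeZero n] {i j : ZMod n} :
    j = i + 1 ↔ j.val = i.val + 1 ∨ i.val + 1 = n ∧ j.val = 0 := by
  have := natCast_eq_natCast_add_one_iff_s18 (ZMod.val_lt i) (ZMod.val_lt j)
  rwa [ZMod.natCast_zmod_val, ZMod.natCast_zmod_val] at this

/-- `p 0, p 1, …, p k` is an induced path of `G`; the values of `p` beyond `k` play no role. -/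
structure IsInducedPath_s18 (G : SimpleGraph V) (k : ℕ) (p : ℕ → V) : Prop where
  injOn : Set.InjOn p (Set.Iic k)
  adj : ∀ t < k, G.Adj (p t) (p (t + 1))
  not_adj : ∀ a b, a + 2 ≤ b → b ≤ k → ¬ G.Adj (p a) (p b)

namespace IsInducedPath_s18

variable {G : SimpleGraph V} {k m : ℕ} {p : ℕ → V}

theorem of_le (hp : IsInducedPath_s18 G k p) (hm : m ≤ k) : IsInducedPath_s18 G m p where
  injOn := hp.injOn.mono (Set.Iic_subset_Iic.2 hm)
  adj t ht := hp.adj t (by omega)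
  not_adj a b hab hb := hp.not_adj a b hab (by omega)

theorem shift_s18 (hp : IsInducedPath_s18 G k p) (hm : m ≤ k) :
    IsInducedPath_s18 G (k - m) (fun t => p (m + t)) where
  injOn a ha b hb hab := by
    simp only [Set.mem_Iic] at ha hb
    have := hp.injOn (show m + a ≤ k by omega) (show m + b ≤ k by omega) hab
    omega
  adj t ht := hp.adj (m + t) (by omega)
  not_adj a b hab hb := hp.not_adj (m + a) (m + b) (by omega) (by omega)

end IsInducedPath_s18

theorem SimpleGraph.sup_edge_deleteEdges {G : SimpleGraph V} {u v : V} (h : ¬ G.Adj u v) :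
    (G ⊔ edge u v).deleteEdges {s(u, v)} = G :=
  (sup_sdiff_right_self (a := G) (b := edge u v)).trans (sdiff_edge G h)

theorem IsInducedCycle.exists_isInducedPath_deleteEdges {G : SimpleGraph V} {n : ℕ}
    {f : ZMod n → V} (hf : IsInducedCycle G n f) (hn : 3 ≤ n) (i : ZMod n) :
    ∃ p : ℕ → V, IsInducedPath_s18 (G.deleteEdges {s(f i, f (i + 1))}) (n - 1) p ∧
      p 0 = f (i + 1) ∧ p (n - 1) = f i := by
  set p : ℕ → V := fun t => f (i + 1 + t)
  have hp0 : p 0 = f (i + 1) := by simp [p]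
  have hpn : p (n - 1) = f i := by simp [p, Nat.cast_pred (by omega : 0 < n)]
  have hinj : Set.InjOn p (Set.Iic (n - 1)) := fun a ha b hb hab => by
    simp only [Set.mem_Iic] at ha hb
    have := (ZMod.natCast_eq_natCast_iff' a b n).1 (add_left_cancel (hf.1 hab))
    rwa [Nat.mod_eq_of_lt (by omega), Nat.mod_eq_of_lt (by omega)] at this
  have hadj : ∀ a b, a < n → b < n → (G.Adj (p a) (p b) ↔
      (b = a + 1 ∨ a + 1 = n ∧ b = 0) ∨ (a = b + 1 ∨ b + 1 = n ∧ a = 0)) := by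
    intro a b ha hb
    rw [hf.2, add_assoc (i + 1), add_assoc (i + 1), add_right_inj, add_right_inj,
      ZMod.natCast_eq_natCast_add_one_iff_s18 ha hb, ZMod.natCast_eq_natCast_add_one_iff_s18 hb ha]
  have hcut : ∀ a b, a ≤ n - 1 → b ≤ n - 1 → s(p a, p b) = s(f i, f (i + 1)) →
      a = n - 1 ∧ b = 0 ∨ a = 0 ∧ b = n - 1 := by
    intro a b ha hb hab
    rw [← hp0, ← hpn, Sym2.eq_iff] at hab
    rcases hab with ⟨h1, h2⟩ | ⟨h1, h2⟩
    · exact .inl ⟨hinj ha Set.self_mem_Iic h1, hinj hb (Set.mem_Iic.2 (Nat.zero_le _)) h2⟩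
    · exact .inr ⟨hinj ha (Set.mem_Iic.2 (Nat.zero_le _)) h1, hinj hb Set.self_mem_Iic h2⟩
  refine ⟨p, ⟨hinj, fun t ht => ?_, fun a b hab hb h => ?_⟩, hp0, hpn⟩
  · refine (deleteEdges_adj ..).2 ⟨(hadj t (t + 1) (by omega) (by omega)).2 (.inl (.inl rfl)), ?_⟩
    intro h
    have := hcut t (t + 1) (by omega) (by omega) h
    omega
  · rw [deleteEdges_adj] at h
    have h' := (hadj a b (by omega) (by omega)).1 h.1
    obtain ⟨hbn, rfl⟩ : b + 1 = n ∧ a = 0 := by omega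
    refine h.2 ?_
    rw [show b = n - 1 by omega, hp0, hpn, Sym2.eq_swap]
    rfl

namespace Chordal

variable {G : SimpleGraph V} {k : ℕ} {p : ℕ → V}

theorem exists_chord (hG : Chordal G) (hk : 3 ≤ k) (hinj : Set.InjOn p (Set.Iic k))
    (hadj : ∀ t < k, G.Adj (p t) (p (t + 1))) (hclose : G.Adj (p k) (p 0)) :
    ∃ a b, a + 2 ≤ b ∧ b ≤ k ∧ ¬(a = 0 ∧ b = k) ∧ G.Adj (p a) (p b) := by
  by_contra! hno
  have hadj_iff : ∀ a b, a ≤ k → b ≤ k → (G.Adj (p a) (p b) ↔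
      (b = a + 1 ∨ a + 1 = k + 1 ∧ b = 0) ∨ (a = b + 1 ∨ b + 1 = k + 1 ∧ a = 0)) := by
    intro a b ha hb
    constructor
    · intro h
      rcases lt_trichotomy a b with hab | rfl | hab
      · by_contra hc
        exact hno a b (by omega) hb (by omega) h
      · exact (h.ne rfl).elim
      · by_contra hc
        exact hno b a (by omega) ha (by omega) h.symm
    · rintro ((rfl | ⟨h, rfl⟩) | (rfl | ⟨h, rfl⟩))
      · exact hadj a (by omega)
      · rwa [show a = k by omega]
      · exact (hadj b (by omega)).symm
      · rw [show b = k by omega]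
        exact hclose.symm
  have hval (i : ZMod (k + 1)) : i.val ≤ k := Nat.lt_succ_iff.1 (ZMod.val_lt i)
  refine hG (k + 1) (by omega) (fun i => p i.val) ⟨fun i j hij => ?_, fun i j => ?_⟩
  · exact ZMod.val_injective _ (hinj (hval i) (hval j) hij)
  · rw [ZMod.eq_add_one_iff_val, ZMod.eq_add_one_iff_val]
    exact hadj_iff _ _ (hval i) (hval j)

theorem exists_adj_add_two (hG : Chordal G) (hk : 3 ≤ k) (hinj : Set.InjOn p (Set.Iic k))
    (hadj : ∀ t < k, G.Adj (p t) (p (t + 1))) (hclose : G.Adj (p k) (p 0)) :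
    ∃ a, a + 2 ≤ k ∧ G.Adj (p a) (p (a + 2)) := by
  induction k using Nat.strong_induction_on generalizing p with
  | _ k ih =>
  obtain ⟨a, b, hab, hb, hne, hpab⟩ := hG.exists_chord hk hinj hadj hclose
  obtain ⟨d, rfl⟩ : ∃ d, b = a + d := ⟨b - a, by omega⟩
  by_cases hd : d = 2
  · subst hd
    exact ⟨a, hb, hpab⟩
  -- a chord of span at least three closes a shorter cycle
  obtain ⟨c, hc, hpc⟩ := ih d (by omega) (by omega) (p := fun t => p (a + t))
    (fun x hx y hy hxy => by
      simp only [Set.mem_Iic] at hx hy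
      have := hinj (show a + x ≤ k by omega) (show a + y ≤ k by omega) hxy
      omega)
    (fun t ht => hadj (a + t) (by omega)) (by simpa using hpab.symm)
  exact ⟨a + c, by omega, by simpa only [add_assoc] using hpc⟩

theorem adj_of_isInducedPath_s18 (hG : Chordal G) (hp : IsInducedPath_s18 G k p) {s : V}
    (hs : ∀ t ≤ k, s ≠ p t) (h0 : G.Adj s (p 0)) (hk : G.Adj s (p k)) :
    ∀ t ≤ k, G.Adj s (p t) := by
  induction k using Nat.strong_induction_on generalizing p with
  | _ k ih =>
  intro t ht
  by_cases hk1 : k ≤ 1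
  · obtain rfl | rfl : t = 0 ∨ t = k := by omega
    exacts [h0, hk]
  -- the cycle `s, p 0, …, p k` has a chord, and it can only join `s` to an inner vertex `p m`
  let q : ℕ → V := fun i => match i with | 0 => s | i + 1 => p i
  have hq : Set.InjOn q (Set.Iic (k + 1)) := by
    rintro (_ | a) ha (_ | b) hb hab <;> simp only [Set.mem_Iic] at ha hb
    · rfl
    · exact absurd hab (hs b (by omega))
    · exact absurd hab.symm (hs a (by omega))
    · simpa using hp.injOn (show a ≤ k by omega) (show b ≤ k by omega) hab
  obtain ⟨_ | a, _ | m, hab, hb, hne, hchord⟩ :=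
    hG.exists_chord (k := k + 1) (p := q) (by omega) hq
      (fun | 0, _ => h0 | t + 1, ht => hp.adj t (by omega)) hk.symm
  · omega
  · change G.Adj s (p m) at hchord
    have hm : m < k := by omega
    rcases le_or_gt t m with htm | hmt
    · exact ih m hm (hp.of_le hm.le) (fun t ht => hs t (by omega)) h0 hchord t htm
    · have := ih (k - m) (by omega) (hp.shift_s18 hm.le) (fun t ht => hs (m + t) (by omega))
        (by simpa using hchord) (by rwa [Nat.add_sub_cancel' hm.le]) (t - m) (by omega)
      rwa [Nat.add_sub_cancel' hmt.le] at this
  · omega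
  · exact absurd hchord (hp.not_adj a m (by omega) (by omega))

theorem exists_adj_add_two_ncard_commonNeighbors_lt [Finite V] {H G' : SimpleGraph V}
    (hH : Chordal H) (hG' : Chordal G') (hle : H ≤ G') (hk : 3 ≤ k) (hp : IsInducedPath_s18 H k p)
    (hclose : G'.Adj (p k) (p 0)) :
    ∃ a, G'.Adj (p a) (p (a + 2)) ∧ ¬ H.Adj (p a) (p (a + 2)) ∧
      (H.commonNeighbors (p 0) (p k)).ncard < (H.commonNeighbors (p a) (p (a + 2))).ncard := by
  obtain ⟨a, ha, hpa⟩ := hG'.exists_adj_add_two hk hp.injOn (fun t ht => hle (hp.adj t ht)) hclose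
  have hoff : ∀ s ∈ H.commonNeighbors (p 0) (p k), ∀ t ≤ k, s ≠ p t := by
    rintro s hs t ht rfl
    rw [mem_commonNeighbors] at hs
    have ht1 : t ≤ 1 := by
      by_contra
      exact hp.not_adj 0 t (by omega) ht hs.1
    exact hp.not_adj t k (by omega) le_rfl hs.2.symm
  -- every common neighbour of the ends sees the whole path, and `p (a + 1)` is a new one
  have hsub : H.commonNeighbors (p 0) (p k) ⊆ H.commonNeighbors (p a) (p (a + 2)) := by
    intro s hs
    have hfan := hH.adj_of_isInducedPath_s18 hp (hoff s hs) (H.mem_commonNeighbors.1 hs).1.symm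
      (H.mem_commonNeighbors.1 hs).2.symm
    exact H.mem_commonNeighbors.2 ⟨(hfan a (by omega)).symm, (hfan (a + 2) (by omega)).symm⟩
  refine ⟨a, hpa, hp.not_adj a (a + 2) le_rfl ha, Set.ncard_lt_ncard ?_⟩
  refine (Set.ssubset_iff_of_subset hsub).2 ⟨p (a + 1), ?_, fun h => hoff _ h (a + 1) (by omega) rfl⟩
  exact H.mem_commonNeighbors.2 ⟨hp.adj a (by omega), (hp.adj (a + 1) (by omega)).symm⟩

theorem exists_adj_not_adj_chordal_sup_edge [Finite V] {H G' : SimpleGraph V} (hH : Chordal H)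
    (hG' : Chordal G') (hle : H ≤ G') (hne : H ≠ G') :
    ∃ u v, G'.Adj u v ∧ ¬ H.Adj u v ∧ Chordal (H ⊔ edge u v) := by
  -- add the missing edge whose ends have the most common `H`-neighbours
  have hmissing : ∃ e : V × V, G'.Adj e.1 e.2 ∧ ¬ H.Adj e.1 e.2 := by
    by_contra! h
    exact hne (le_antisymm hle fun u v huv => h (u, v) huv)
  obtain ⟨⟨u, v⟩, ⟨huv, hnuv⟩, hmax⟩ := Set.exists_max_image _
    (fun e => (H.commonNeighbors e.1 e.2).ncard) (Set.toFinite _) hmissing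
  refine ⟨u, v, huv, hnuv, fun n hn f hf => ?_⟩
  by_cases hcross : ∃ i, s(f i, f (i + 1)) = s(u, v)
  · obtain ⟨i, hi⟩ := hcross
    obtain ⟨p, hp, hp0, hpn⟩ := hf.exists_isInducedPath_deleteEdges (by omega) i
    rw [hi, sup_edge_deleteEdges hnuv] at hp
    have hclose : G'.Adj (p (n - 1)) (p 0) := by
      rwa [hp0, hpn, ← mem_edgeSet, hi]
    obtain ⟨a, hGa, hHa, hlt⟩ :=
      hH.exists_adj_add_two_ncard_commonNeighbors_lt hG' hle (by omega) hp hclose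
    have hends : (H.commonNeighbors (p 0) (p (n - 1))).ncard = (H.commonNeighbors u v).ncard := by
      rw [hp0, hpn]
      rcases Sym2.eq_iff.1 hi with ⟨rfl, rfl⟩ | ⟨rfl, rfl⟩
      · rw [commonNeighbors_symm]
      · rfl
    exact absurd (hmax (p a, p (a + 2)) ⟨hGa, hHa⟩) (not_le.2 (hends ▸ hlt))
  · push Not at hcross
    refine hH n hn f ⟨hf.1, fun i j => ?_⟩
    rw [← hf.2, sup_adj, iff_self_or]
    intro h
    have huv' := (adj_edge _ _).1 h |>.1
    rcases (hf.2 i j).1 (Or.inr h) with rfl | rfl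
    · exact absurd huv'.symm (hcross i)
    · exact absurd (Sym2.eq_swap.trans huv'.symm) (hcross j)

theorem exists_adj_not_adj_chordal_deleteEdges [Finite V] {H G' : SimpleGraph V}
    (hH : Chordal H) (hG' : Chordal G') (hle : H ≤ G') (hne : H ≠ G') :
    ∃ u v, G'.Adj u v ∧ ¬ H.Adj u v ∧ Chordal (G'.deleteEdges {s(u, v)}) := by
  induction H using WellFoundedGT.induction with
  | _ H ih =>
  obtain ⟨u, v, huv, hnuv, hchordal⟩ := hH.exists_adj_not_adj_chordal_sup_edge hG' hle hne
  by_cases hfull : H ⊔ edge u v = G'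
  · refine ⟨u, v, huv, hnuv, ?_⟩
    rwa [← hfull, sup_edge_deleteEdges hnuv]
  · obtain ⟨w, x, hwx, hnwx, hchordal'⟩ := ih _ (H.lt_sup_edge _ _ huv.ne hnuv) hchordal
      (sup_le hle ((edge_le_iff G').2 (.inr huv))) hfull
    exact ⟨w, x, hwx, fun h => hnwx (le_sup_left (b := edge u v) h), hchordal'⟩

end Chordal

end

theorem stmt_18 {V : Type*} [Fintype V] (G G' : SimpleGraph V)
    (h : ChordalCompletion G G') (hnm : ¬ MinimalChordalCompletion G G') :
    ∃ u v : V, G'.Adj u v ∧ ¬ G.Adj u v ∧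
      Chordal (G'.deleteEdges {s(u, v)}) := by
  obtain ⟨H, ⟨hH, hGH⟩, hHG', hne⟩ : ∃ H, ChordalCompletion G H ∧ H ≤ G' ∧ H ≠ G' := by
    simpa [MinimalChordalCompletion, h] using hnm
  obtain ⟨u, v, huv, hnuv, hchordal⟩ := hH.exists_adj_not_adj_chordal_deleteEdges h.1 hHG' hne
  exact ⟨u, v, huv, fun hG => hnuv (hGH hG), hchordal⟩
end
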